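/- Let V be a vector space over ℝ, let R* ⊆ V be a set of vectors, and let S = span R*. Suppose B ⊆ R* is linearly independent with span B = S (i.e., B is a basis of S contained in R*), and B = B₁ ∪ B₂ with B₁, B₂ nonempty and disjoint. Assume R* ⊆ span B₁ ∪ span B₂. Define R₁ = { r ∈ R* : r ∈ span B₁ } and R₂ = R* \ R₁. Then: (i) R₁ and R₂ partition R* and R₂ ⊆ span B₂; (ii) span R₁ = span B₁ and span R₂ = span B₂; and (iii) S is the internal direct sum of span R₁ and span R₂, i.e., span R₁ ∩ span R₂ = {0} and span R₁ + span R₂ = S. -/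
import Mathlib


open Submodule

/-- Proposition 6 of the paper: the decomposition of the set `R*` of reaction vectors induced by a
split basis `B = B₁ ∪ B₂` of `S = span R*`, assuming `R* ⊆ span B₁ ∪ span B₂`, partitions `R*`
into `R₁`, `R₂` with `span Rᵢ = span Bᵢ`, and `S` is the internal direct sum of
`span R₁` and `span R₂`. -/
theorem induced_binary_decomposition_independent
    {V : Type*} [AddCommGroup V] [Module ℝ V] (Rstar B B₁ B₂ : Set V) (S : Submodule ℝ V)
    (hS : S = span ℝ Rstar)
    (hBR : B ⊆ Rstar)
    (hBli : LinearIndependent ℝ ((↑) : B → V))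
    (hBspan : span ℝ B = S)
    (hBunion : B = B₁ ∪ B₂)
    (h₁ne : B₁.Nonempty) (h₂ne : B₂.Nonempty)
    (hdisj : Disjoint B₁ B₂)
    (hcover : Rstar ⊆ (span ℝ B₁ : Set V) ∪ (span ℝ B₂ : Set V)) :
    ∀ R₁ R₂ : Set V, R₁ = {r ∈ Rstar | r ∈ span ℝ B₁} → R₂ = Rstar \ R₁ →
      ((R₁ ∪ R₂ = Rstar ∧ Disjoint R₁ R₂ ∧ R₂ ⊆ (span ℝ B₂ : Set V)) ∧
        (span ℝ R₁ = span ℝ B₁ ∧ span ℝ R₂ = span ℝ B₂) ∧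
        (span ℝ R₁ ⊓ span ℝ R₂ = ⊥ ∧ span ℝ R₁ ⊔ span ℝ R₂ = S)) := by
  intro R₁ R₂ hR₁ hR₂
  have hB₁B : B₁ ⊆ B := hBunion ▸ Set.subset_union_left
  have hB₂B : B₂ ⊆ B := hBunion ▸ Set.subset_union_right
  -- disjointness of spans
  have hspdisj : Disjoint (span ℝ B₁) (span ℝ B₂) := by
    have := hBli.disjoint_span_image
      (s := (↑) ⁻¹' B₁) (t := (↑) ⁻¹' B₂) (hdisj.preimage _)
    have h1 : (↑) '' ((↑) ⁻¹' B₁ : Set B) = B₁ := by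
      rw [Subtype.image_preimage_coe, Set.inter_eq_right.2 hB₁B]
    have h2 : (↑) '' ((↑) ⁻¹' B₂ : Set B) = B₂ := by
      rw [Subtype.image_preimage_coe, Set.inter_eq_right.2 hB₂B]
    rwa [h1, h2] at this
  -- R₂ ⊆ span B₂
  have hR₂sub : R₂ ⊆ (span ℝ B₂ : Set V) := by
    intro r hr
    rw [hR₂] at hr
    rcases hcover hr.1 with h | h
    · exact absurd (hR₁ ▸ ⟨hr.1, h⟩) hr.2
    · exact h
  have hR₁sub : R₁ ⊆ (span ℝ B₁ : Set V) := by
    intro r hr; rw [hR₁] at hr; exact hr.2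
  -- B₁ ⊆ R₁
  have hB₁R₁ : B₁ ⊆ R₁ := by
    intro b hb
    rw [hR₁]
    exact ⟨hBR (hB₁B hb), subset_span hb⟩
  -- B₂ ⊆ R₂
  have hB₂R₂ : B₂ ⊆ R₂ := by
    intro b hb
    rw [hR₂]
    refine ⟨hBR (hB₂B hb), ?_⟩
    rw [hR₁]
    rintro ⟨-, hmem⟩
    have hb0 : b ≠ 0 := hBli.ne_zero ⟨b, hB₂B hb⟩
    exact hb0 (disjoint_def.1 hspdisj b hmem (subset_span hb))
  have hsp₁ : span ℝ R₁ = span ℝ B₁ :=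
    le_antisymm (span_le.2 hR₁sub) (span_mono hB₁R₁)
  have hsp₂ : span ℝ R₂ = span ℝ B₂ :=
    le_antisymm (span_le.2 hR₂sub) (span_mono hB₂R₂)
  refine ⟨⟨?_, ?_, hR₂sub⟩, ⟨hsp₁, hsp₂⟩, ?_, ?_⟩
  · rw [hR₁, hR₂, hR₁]
    ext r
    constructor
    · rintro (h | h)
      · exact h.1
      · exact h.1
    · intro h
      by_cases hh : r ∈ span ℝ B₁
      · exact Or.inl ⟨h, hh⟩
      · exact Or.inr ⟨h, fun hc => hh hc.2⟩
  · rw [hR₂]; exact Set.disjoint_sdiff_right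
  · rw [hsp₁, hsp₂, ← disjoint_iff]; exact hspdisj
  · rw [hsp₁, hsp₂, ← span_union, ← hBunion, hBspan]
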